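/- (Two-dimensional ping-pong table.) The sets X₂ and Y₂ form a valid ping-pong table for ⟨R₂⟩ and ⟨T₂⟩: (i) X₂ ∩ Y₂ = ∅; (ii) each of R₂ and R₂² maps X₂ into Y₂; and (iii) for every nonzero integer k, the matrix T₂^k maps Y₂ into X₂. -/

import Mathlib

open Matrix

/-- The matrix `R₂`. -/
def R2 : Matrix (Fin 2) (Fin 2) ℝ := !![0,-1; 1,-1]

/-- The matrix `T₂`. -/
def T2 : Matrix (Fin 2) (Fin 2) ℝ := !![1,0; -3,1]

/-- `T₂` as an element of `GL(2,ℝ)`, so that its integer powers make sense. -/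
noncomputable def T2GL : Matrix.GeneralLinearGroup (Fin 2) ℝ :=
  ⟨T2, !![1,0; 3,1],
   by rw [Matrix.one_fin_two]; simp [T2, Matrix.mul_fin_two],
   by rw [Matrix.one_fin_two]; simp [T2, Matrix.mul_fin_two]⟩

/-- The open cone `C₂` generated by `u₂ = (-1,1)` and `v₂ = (1,2)`. -/
def C2 : Set (Fin 2 → ℝ) :=
  {p | ∃ a b : ℝ, 0 < a ∧ 0 < b ∧ p = a • (![-1,1] : Fin 2 → ℝ) + b • (![1,2] : Fin 2 → ℝ)}

/-- `X₂ = C₂ ∪ (−C₂)`. -/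
def X2 : Set (Fin 2 → ℝ) := C2 ∪ (-C2)

/-- `Y₂ = R₂·X₂ ∪ R₂²·X₂`. -/
def Y2 : Set (Fin 2 → ℝ) := R2.mulVec '' X2 ∪ (R2 ^ 2).mulVec '' X2

lemma mem_C2_iff (p : Fin 2 → ℝ) : p ∈ C2 ↔ 0 < p 1 - 2 * p 0 ∧ 0 < p 0 + p 1 := by
  constructor
  · rintro ⟨a, b, ha, hb, rfl⟩
    constructor <;> · simp; nlinarith
  · rintro ⟨h1, h2⟩
    refine ⟨(p 1 - 2 * p 0) / 3, (p 0 + p 1) / 3, by linarith, by linarith, ?_⟩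
    funext i
    fin_cases i <;> · simp; ring
lemma mem_X2_iff (p : Fin 2 → ℝ) : p ∈ X2 ↔ 0 < (p 1 - 2 * p 0) * (p 0 + p 1) := by
  rw [X2, Set.mem_union, Set.mem_neg, mem_C2_iff, mem_C2_iff]
  simp only [Pi.neg_apply]
  constructor
  · rintro (⟨h1, h2⟩ | ⟨h1, h2⟩) <;> nlinarith
  · intro h
    rcases mul_pos_iff.mp h with ⟨h1, h2⟩ | ⟨h1, h2⟩
    · left; exact ⟨h1, h2⟩
    · right; constructor <;> linarith

lemma key (x y m : ℝ) (hm : 3 ≤ m ∨ m ≤ -3)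
    (hY : 0 < (x - 2*y) * (y - 2*x) ∨ 0 < (x + y) * (x - 2*y)) :
    0 < (y - (2+m)*x) * (x + y - m*x) := by
  rcases hY with h | h <;> rcases mul_pos_iff.mp h with ⟨h1, h2⟩ | ⟨h1, h2⟩ <;>
      rcases hm with hm | hm
  · -- C>0, A>0, m ≥ 3 ; x < 0
    have hx : x < 0 := by linarith
    have hh : 0 ≤ (m - 3) * (-x) := mul_nonneg (by linarith) (by linarith)
    exact mul_pos (by nlinarith) (by nlinarith)
  · -- C>0, A>0, m ≤ -3 ; x < 0
    have hx : x < 0 := by linarith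
    have hh : 0 ≤ (-3 - m) * (-x) := mul_nonneg (by linarith) (by linarith)
    exact mul_pos_of_neg_of_neg (by nlinarith) (by nlinarith)
  · -- C<0, A<0, m ≥ 3 ; x > 0
    have hx : 0 < x := by linarith
    have hh : 0 ≤ (m - 3) * x := mul_nonneg (by linarith) (by linarith)
    exact mul_pos_of_neg_of_neg (by nlinarith) (by nlinarith)
  · -- C<0, A<0, m ≤ -3 ; x > 0
    have hx : 0 < x := by linarith
    have hh : 0 ≤ (-3 - m) * x := mul_nonneg (by linarith) (by linarith)
    exact mul_pos (by nlinarith) (by nlinarith)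
  · -- B>0, C>0, m ≥ 3 ; x > 0
    have hx : 0 < x := by linarith
    have hh : 0 ≤ (m - 3) * x := mul_nonneg (by linarith) (by linarith)
    exact mul_pos_of_neg_of_neg (by nlinarith) (by nlinarith)
  · -- B>0, C>0, m ≤ -3 ; x > 0
    have hx : 0 < x := by linarith
    have hh : 0 ≤ (-3 - m) * x := mul_nonneg (by linarith) (by linarith)
    exact mul_pos (by nlinarith) (by nlinarith)
  · -- B<0, C<0, m ≥ 3 ; x < 0
    have hx : x < 0 := by linarith
    have hh : 0 ≤ (m - 3) * (-x) := mul_nonneg (by linarith) (by linarith)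
    exact mul_pos (by nlinarith) (by nlinarith)
  · -- B<0, C<0, m ≤ -3 ; x < 0
    have hx : x < 0 := by linarith
    have hh : 0 ≤ (-3 - m) * (-x) := mul_nonneg (by linarith) (by linarith)
    exact mul_pos_of_neg_of_neg (by nlinarith) (by nlinarith)

lemma R2_mulVec (p : Fin 2 → ℝ) : R2.mulVec p = ![-p 1, p 0 - p 1] := by
  funext i
  fin_cases i <;> (simp [R2, Matrix.mulVec, dotProduct, Fin.sum_univ_two]; try ring)

lemma R2sq_mulVec (p : Fin 2 → ℝ) : (R2 ^ 2).mulVec p = ![-p 0 + p 1, -p 0] := by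
  have : R2 ^ 2 = !![-1, 1; -1, 0] := by
    rw [pow_two, R2, Matrix.mul_fin_two]; norm_num
  rw [this]
  funext i
  fin_cases i <;> (simp [Matrix.mulVec, dotProduct, Fin.sum_univ_two]; try ring)

lemma T2GL_zpow (k : ℤ) :
    ((T2GL ^ k : Matrix.GeneralLinearGroup (Fin 2) ℝ) : Matrix (Fin 2) (Fin 2) ℝ)
      = !![1, 0; -3*(k:ℝ), 1] := by
  induction k using Int.induction_on with
  | zero => rw [zpow_zero, Units.val_one, Matrix.one_fin_two]; norm_num
  | succ n ih =>
      rw [_root_.zpow_add_one, Units.val_mul, ih]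
      show _ * T2 = _
      rw [T2, Matrix.mul_fin_two]
      push_cast
      norm_num
      ring
  | pred n ih =>
      rw [_root_.zpow_sub_one, Units.val_mul, ih]
      show _ * (!![1,0; 3,1] : Matrix (Fin 2) (Fin 2) ℝ) = _
      rw [Matrix.mul_fin_two]
      push_cast
      norm_num
      ring

/-- The two-dimensional ping-pong table: `X₂ ∩ Y₂ = ∅`, each of `R₂, R₂²` maps
`X₂` into `Y₂`, and every nonzero integer power of `T₂` maps `Y₂` into `X₂`. -/
theorem two_dim_ping_pong :
    X2 ∩ Y2 = ∅ ∧
    (∀ p ∈ X2, R2.mulVec p ∈ Y2 ∧ (R2 ^ 2).mulVec p ∈ Y2) ∧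
    (∀ k : ℤ, k ≠ 0 → ∀ q ∈ Y2, ((T2GL ^ k : Matrix.GeneralLinearGroup (Fin 2) ℝ) :
        Matrix (Fin 2) (Fin 2) ℝ).mulVec q ∈ X2) := by
  refine ⟨?_, ?_, ?_⟩
  · ext q
    simp only [Set.mem_inter_iff, Set.mem_empty_iff_false, iff_false, not_and]
    intro hX hY
    rw [mem_X2_iff] at hX
    rcases hY with ⟨p, hp, rfl⟩ | ⟨p, hp, rfl⟩ <;> rw [mem_X2_iff] at hp
    · rw [R2_mulVec p] at hX
      simp at hX
      nlinarith [sq_nonneg (p 1 - 2 * p 0), sq_nonneg (p 0 + p 1)]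
    · rw [R2sq_mulVec p] at hX
      simp at hX
      nlinarith [sq_nonneg (p 1 - 2 * p 0), sq_nonneg (p 0 + p 1)]
  · intro p hp
    exact ⟨Or.inl ⟨p, hp, rfl⟩, Or.inr ⟨p, hp, rfl⟩⟩
  · intro k hk q hq
    rw [T2GL_zpow k, mem_X2_iff]
    have hT : (!![1, 0; -3*(k:ℝ), 1]).mulVec q = ![q 0, -3*(k:ℝ) * q 0 + q 1] := by
      funext i
      fin_cases i <;> (simp [Matrix.mulVec, dotProduct, Fin.sum_univ_two]; try ring)
    rw [hT]
    simp only [Matrix.cons_val_zero, Matrix.cons_val_one, Matrix.head_cons]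
    have hm : (3:ℝ) ≤ 3 * (k:ℝ) ∨ 3 * (k:ℝ) ≤ -3 := by
      rcases lt_or_gt_of_ne hk with h | h
      · right
        have : (k:ℝ) ≤ -1 := by exact_mod_cast (show k ≤ -1 by omega)
        linarith
      · left
        have : (1:ℝ) ≤ (k:ℝ) := by exact_mod_cast h
        linarith
    have hY : 0 < (q 0 - 2 * q 1) * (q 1 - 2 * q 0) ∨
        0 < (q 0 + q 1) * (q 0 - 2 * q 1) := by
      rcases hq with ⟨p, hp, rfl⟩ | ⟨p, hp, rfl⟩ <;> rw [mem_X2_iff] at hp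
      · left
        rw [R2_mulVec p]
        simp
        nlinarith
      · right
        rw [R2sq_mulVec p]
        simp
        nlinarith
    have h := key (q 0) (q 1) (3 * (k:ℝ)) hm hY
    nlinarith [h]
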